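/- Let a, b > 0 and define the Kontorovich–Lebedev convolution (f*g)(x) = (1/(2x))·∫_0^∞∫_0^∞ exp(−(1/2)(x(u²+y²)/(uy) + yu/x))·f(u)·g(y) du dy for x > 0. Then for f(x) = x^{2a−1} and g(x) = x^{2b−1}, one has (f*g)(x) = 2^{a+b−1}·x^{a+b−1}·Γ(a+b)·K_{b−a}(x) for all x > 0. -/
import Mathlib

open MeasureTheory Real

/-- Macdonald function of real order `ν`. -/
noncomputable def Kre (ν z : ℝ) : ℝ :=
  ∫ t in Set.Ioi (0:ℝ), Real.exp (-z * Real.cosh t) * Real.cosh (ν * t)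

/-- The Kontorovich–Lebedev convolution. -/
noncomputable def KLconv (f g : ℝ → ℝ) (x : ℝ) : ℝ :=
  (1 / (2*x)) * ∫ u in Set.Ioi (0:ℝ), ∫ y in Set.Ioi (0:ℝ),
    Real.exp (-(1/2) * (x * (u^2 + y^2) / (u*y) + y*u/x)) * f u * g y

section aux

open Set

lemma cosh_ge_sq (t : ℝ) : t^2/8 ≤ Real.cosh t := by
  have h1 : Real.exp |t| ≤ 2 * Real.cosh t := by
    rw [Real.cosh_eq]
    rcases abs_cases t with ⟨h, _⟩ | ⟨h, _⟩ <;> rw [h] <;>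
      nlinarith [Real.exp_pos t, Real.exp_pos (-t)]
  have h2 : |t|/2 + 1 ≤ Real.exp (|t|/2) := Real.add_one_le_exp _
  have h3 : Real.exp (|t|/2) * Real.exp (|t|/2) = Real.exp |t| := by
    rw [← Real.exp_add]; ring_nf
  have h4 : (0:ℝ) ≤ |t| := abs_nonneg t
  have h5 : |t|^2 = t^2 := sq_abs t
  nlinarith [sq_nonneg (|t|/2 + 1)]

lemma integrable_exp_sub_cosh (ν x : ℝ) (hx : 0 < x) :
    Integrable (fun t => Real.exp (ν*t - x*Real.cosh t)) := by
  have hI : Integrable (fun t : ℝ => Real.exp (2*ν^2/x) * Real.exp (-(x/8) * (t - 4*ν/x)^2)) :=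
    ((integrable_exp_neg_mul_sq (by positivity : 0 < x/8)).comp_sub_right (4*ν/x)).const_mul _
  refine hI.mono' ?_ ?_
  · exact (Real.measurable_exp.comp ((measurable_id.const_mul ν).sub
      (Real.measurable_cosh.const_mul x))).aestronglyMeasurable
  · refine Filter.Eventually.of_forall fun t => ?_
    rw [Real.norm_eq_abs, abs_of_pos (Real.exp_pos _), ← Real.exp_add]
    apply Real.exp_le_exp.2
    have key : 2*ν^2/x + -(x/8)*(t-4*ν/x)^2 = ν*t - x*(t^2/8) := by
      field_simp; ring
    have h2 : x*(t^2/8) ≤ x * Real.cosh t :=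
      mul_le_mul_of_nonneg_left (cosh_ge_sq t) hx.le
    linarith

lemma exp_image_smul (ν x : ℝ) (t : ℝ) :
    |Real.exp t| • ((Real.exp t) ^ ν * Real.exp (-(x/2) * (Real.exp t + (Real.exp t)⁻¹)))
      = Real.exp ((ν+1)*t - x*Real.cosh t) := by
  rw [abs_of_pos (Real.exp_pos t), smul_eq_mul, ← Real.exp_mul, ← Real.exp_neg,
    ← Real.exp_add, ← Real.exp_add, Real.cosh_eq]
  congr 1; ring

lemma himg : Set.Ioi (0:ℝ) = Real.exp '' Set.univ := by
  rw [Set.image_univ, Real.range_exp]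

lemma integrableOn_klker (ν x : ℝ) (hx : 0 < x) :
    IntegrableOn (fun w => w ^ ν * Real.exp (-(x/2) * (w + w⁻¹))) (Set.Ioi 0) := by
  rw [himg, integrableOn_image_iff_integrableOn_abs_deriv_smul MeasurableSet.univ
    (fun t _ => (Real.hasDerivAt_exp t).hasDerivWithinAt) Real.exp_injective.injOn]
  simp only [exp_image_smul ν x]
  rw [integrableOn_univ]
  exact integrable_exp_sub_cosh (ν+1) x hx

lemma integral_klker (ν x : ℝ) (hx : 0 < x) :
    ∫ w in Set.Ioi (0:ℝ), w ^ ν * Real.exp (-(x/2) * (w + w⁻¹)) = 2 * Kre (ν+1) x := by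
  rw [himg, integral_image_eq_integral_abs_deriv_smul MeasurableSet.univ
    (fun t _ => (Real.hasDerivAt_exp t).hasDerivWithinAt) Real.exp_injective.injOn]
  simp only [exp_image_smul ν x]
  rw [Measure.restrict_univ]
  set f : ℝ → ℝ := fun t => Real.exp ((ν+1)*t - x*Real.cosh t) with hf
  have hint : Integrable f := integrable_exp_sub_cosh (ν+1) x hx
  rw [← intervalIntegral.integral_Iic_add_Ioi (hint.integrableOn) (hint.integrableOn)]
  have hneg : ∫ t in Set.Iic (0:ℝ), f t = ∫ t in Set.Ioi (0:ℝ), f (-t) := by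
    rw [integral_comp_neg_Ioi, neg_zero]
  rw [hneg, ← integral_add ((hint.comp_neg).integrableOn) (hint.integrableOn)]
  rw [Kre, ← integral_const_mul]
  refine setIntegral_congr_fun measurableSet_Ioi fun t _ => ?_
  simp only [hf]
  rw [Real.cosh_neg, Real.cosh_eq ((ν+1)*t)]
  rw [show (ν+1)*(-t) - x*Real.cosh t = -((ν+1)*t) + -(x*Real.cosh t) by ring,
      show (ν+1)*t - x*Real.cosh t = ((ν+1)*t) + -(x*Real.cosh t) by ring,
      Real.exp_add, Real.exp_add]
  rw [neg_mul]
  ring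

lemma gauss_moment {c l : ℝ} (hc : 0 < c) (hl : 0 < l) :
    ∫ u in Ioi (0:ℝ), u ^ (2*c-1) * Real.exp (-l*u^2)
      = l ^ (-c) * ((1/2) * Real.Gamma c) := by
  have h1 : ∫ u in Ioi (0:ℝ), u ^ (2*c-1) * Real.exp (-l*u^2)
      = ∫ u in Ioi (0:ℝ), u ^ (2*c-1) * Real.exp (-l*u^(2:ℝ)) := by
    refine setIntegral_congr_fun measurableSet_Ioi fun u _ => ?_
    rw [show ((2:ℝ)) = ((2:ℕ):ℝ) by norm_num, Real.rpow_natCast]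
  rw [h1, integral_rpow_mul_exp_neg_mul_rpow two_pos (by linarith) hl,
    show (-(2*c-1+1)/2 : ℝ) = -c by ring, show ((2*c-1+1)/2 : ℝ) = c by ring]
  ring

end aux

open Set in
theorem KLconv_rpow (a b : ℝ) (ha : 0 < a) (hb : 0 < b) (x : ℝ) (hx : 0 < x) :
    KLconv (fun u => u ^ (2*a - 1)) (fun y => y ^ (2*b - 1)) x
      = 2 ^ (a + b - 1) * x ^ (a + b - 1) * Real.Gamma (a + b) * Kre (b - a) x := by
  have hc : (0:ℝ) < a + b := by linarith
  set F : ℝ → ℝ → ℝ := fun u w =>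
    Real.exp (-(1/2) * (x*(1+w^2)/w + u^2*w/x)) * u ^ (2*a+2*b-1) * w ^ (2*b-1) with hF
  -- Step A : rewrite inner integral by the substitution y = u * w
  have stepA : ∀ u ∈ Ioi (0:ℝ),
      (∫ y in Ioi (0:ℝ),
        Real.exp (-(1/2) * (x * (u^2 + y^2) / (u*y) + y*u/x)) * u ^ (2*a-1) * y ^ (2*b-1))
      = ∫ w in Ioi (0:ℝ), F u w := by
    intro u hu
    rw [mem_Ioi] at hu
    set h : ℝ → ℝ := fun y =>
      Real.exp (-(1/2) * (x * (u^2 + y^2) / (u*y) + y*u/x)) * u ^ (2*a-1) * y ^ (2*b-1) with hh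
    have hsub := integral_comp_mul_left_Ioi h 0 hu
    rw [mul_zero] at hsub
    have h2 : ∫ y in Ioi (0:ℝ), h y = u * ∫ w in Ioi (0:ℝ), h (u*w) := by
      rw [hsub, smul_eq_mul, ← mul_assoc, mul_inv_cancel₀ hu.ne', one_mul]
    rw [h2, ← integral_const_mul]
    refine setIntegral_congr_fun measurableSet_Ioi fun w hw => ?_
    rw [mem_Ioi] at hw
    simp only [hh, hF]
    have harg : x * (u^2 + (u*w)^2) / (u*(u*w)) + (u*w)*u/x = x*(1+w^2)/w + u^2*w/x := by
      field_simp
    rw [harg, Real.mul_rpow hu.le hw.le,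
      show 2*a+2*b-1 = (2*a-1)+((2*b-1)+1) by ring,
      Real.rpow_add hu, Real.rpow_add hu, Real.rpow_one]
    ring
  -- value of the inner u-integral for fixed w
  have hval : ∀ w ∈ Ioi (0:ℝ), (∫ u in Ioi (0:ℝ), F u w)
      = ((1/2) * Real.Gamma (a+b) * (2*x)^(a+b))
          * (w ^ (b-a-1) * Real.exp (-(x/2) * (w + w⁻¹))) := by
    intro w hw
    rw [mem_Ioi] at hw
    have hsplit : ∀ u : ℝ, F u w
        = (Real.exp (-(1/2) * (x*(1+w^2)/w)) * w ^ (2*b-1))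
            * (u ^ (2*(a+b)-1) * Real.exp (-(w/(2*x)) * u^2)) := by
      intro u
      simp only [hF]
      rw [show -(1/2) * (x*(1+w^2)/w + u^2*w/x)
          = -(1/2) * (x*(1+w^2)/w) + -(w/(2*x)) * u^2 by field_simp; ring,
        Real.exp_add, show 2*(a+b)-1 = 2*a+2*b-1 by ring]
      ring
    simp only [hsplit]
    rw [integral_const_mul, gauss_moment hc (by positivity)]
    have hpow : (w/(2*x)) ^ (-(a+b)) = w ^ (-(a+b)) * (2*x) ^ (a+b) := by
      rw [Real.div_rpow hw.le (by positivity), Real.rpow_neg (by positivity : (0:ℝ) ≤ 2*x)]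
      field_simp
    rw [hpow]
    have hw2 : w ^ (2*b-1) * w ^ (-(a+b)) = w ^ (b-a-1) := by
      rw [← Real.rpow_add hw]; congr 1; ring
    have hexp : Real.exp (-(1/2) * (x*(1+w^2)/w)) = Real.exp (-(x/2) * (w + w⁻¹)) := by
      congr 1
      field_simp
      try ring
      try tauto
    calc Real.exp (-(1/2) * (x*(1+w^2)/w)) * w ^ (2*b-1)
          * (w ^ (-(a+b)) * (2*x)^(a+b) * ((1/2) * Real.Gamma (a+b)))
        = ((1/2) * Real.Gamma (a+b) * (2*x)^(a+b))
            * ((w ^ (2*b-1) * w ^ (-(a+b))) * Real.exp (-(1/2) * (x*(1+w^2)/w))) := by ring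
      _ = _ := by rw [hw2, hexp]
  -- measurability of F
  have hmeas : AEStronglyMeasurable (Function.uncurry F)
      (((volume : Measure ℝ).restrict (Ioi 0)).prod ((volume : Measure ℝ).restrict (Ioi 0))) := by
    apply Measurable.aestronglyMeasurable
    simp only [hF, Function.uncurry]
    fun_prop
  -- integrability of F on the product
  have hint : Integrable (Function.uncurry F)
      (((volume : Measure ℝ).restrict (Ioi 0)).prod ((volume : Measure ℝ).restrict (Ioi 0))) := by
    rw [integrable_prod_iff' hmeas]
    constructor
    · filter_upwards [ae_restrict_mem measurableSet_Ioi] with w hw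
      rw [mem_Ioi] at hw
      have hsplit : ∀ u : ℝ, F u w
          = (Real.exp (-(1/2) * (x*(1+w^2)/w)) * w ^ (2*b-1))
              * (u ^ (2*(a+b)-1) * Real.exp (-(w/(2*x)) * u^2)) := by
        intro u
        simp only [hF]
        rw [show -(1/2) * (x*(1+w^2)/w + u^2*w/x)
            = -(1/2) * (x*(1+w^2)/w) + -(w/(2*x)) * u^2 by field_simp; ring,
          Real.exp_add, show 2*(a+b)-1 = 2*a+2*b-1 by ring]
        ring
      simp only [Function.uncurry, hsplit]
      exact (integrableOn_rpow_mul_exp_neg_mul_sq (by positivity) (by linarith)).const_mul _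
    · apply Integrable.congr
        (((integrableOn_klker (b-a-1) x hx).const_mul
          ((1/2) * Real.Gamma (a+b) * (2*x)^(a+b))))
      filter_upwards [ae_restrict_mem measurableSet_Ioi] with w hw
      have h1 : ∫ u in Ioi (0:ℝ), ‖F u w‖ = ∫ u in Ioi (0:ℝ), F u w := by
        refine setIntegral_congr_fun measurableSet_Ioi fun u hu => ?_
        rw [mem_Ioi] at hu
        rw [mem_Ioi] at hw
        rw [Real.norm_of_nonneg]
        simp only [hF]
        have := Real.rpow_nonneg hu.le (2*a+2*b-1)
        have := Real.rpow_nonneg hw.le (2*b-1)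
        positivity
      simp only [Function.uncurry]
      rw [h1, hval w hw]
  -- assemble
  rw [KLconv]
  have hdouble : (∫ u in Ioi (0:ℝ), ∫ y in Ioi (0:ℝ),
      Real.exp (-(1/2) * (x * (u^2 + y^2) / (u*y) + y*u/x)) * u ^ (2*a-1) * y ^ (2*b-1))
      = Real.Gamma (a+b) * (2*x)^(a+b) * Kre (b-a) x := by
    rw [setIntegral_congr_fun measurableSet_Ioi stepA, integral_integral_swap hint,
      setIntegral_congr_fun measurableSet_Ioi hval, integral_const_mul,
      integral_klker (b-a-1) x hx, show b-a-1+1 = b-a by ring]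
    ring
  rw [hdouble]
  have h2x : (2*x)^(a+b) = (2:ℝ)^(a+b-1) * x^(a+b-1) * (2*x) := by
    rw [show a+b = (a+b-1)+1 by ring, Real.rpow_add_one (by positivity : (2*x) ≠ 0),
      Real.mul_rpow (by norm_num) hx.le]
    ring_nf
  rw [h2x]
  field_simp
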